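/- arXiv:2511.21219 — 3 statements merged into one kernel-verified Lean document; each statement's English description precedes it below -/
import Mathlib

section
/- Let Ξ = col(Φ, Z) be the vertical stacking of matrices Φ ∈ ℝ^{k×N} and Z ∈ ℝ^{r×N}, and suppose Ξ has full row rank. Then I − Ξ†Ξ = (I − Φ†Φ)(I − Z^⊥† Z^⊥), where Z^⊥ = Z(I − Φ†Φ). -/
open Matrix

/-- The four Moore–Penrose conditions for `B` to be the pseudoinverse of `A`. -/
def IsMoorePenrose {m n : Type*} [Fintype m] [Fintype n]
    (A : Matrix m n ℝ) (B : Matrix n m ℝ) : Prop :=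
  A * B * A = A ∧ B * A * B = B ∧ (A * B)ᵀ = A * B ∧ (B * A)ᵀ = B * A

theorem stmt2 {k r N : ℕ} (Φ : Matrix (Fin k) (Fin N) ℝ) (Z : Matrix (Fin r) (Fin N) ℝ)
    (Φd : Matrix (Fin N) (Fin k) ℝ) (hΦ : IsMoorePenrose Φ Φd)
    (Ξd : Matrix (Fin N) (Fin k ⊕ Fin r) ℝ)
    (hΞ : IsMoorePenrose (Matrix.fromRows Φ Z) Ξd)
    (Zpd : Matrix (Fin N) (Fin r) ℝ)
    (hZp : IsMoorePenrose (Z * (1 - Φd * Φ)) Zpd)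
    (hrank : (Matrix.fromRows Φ Z).rank = k + r) :
    (1 : Matrix (Fin N) (Fin N) ℝ) - Ξd * Matrix.fromRows Φ Z
      = (1 - Φd * Φ) * (1 - Zpd * (Z * (1 - Φd * Φ))) := by
  obtain ⟨hΦ1, hΦ2, hΦ3, hΦ4⟩ := hΦ
  obtain ⟨hΞ1, hΞ2, hΞ3, hΞ4⟩ := hΞ
  obtain ⟨hZ1, hZ2, hZ3, hZ4⟩ := hZp
  set P : Matrix (Fin N) (Fin N) ℝ := Φd * Φ with hP
  set Zp : Matrix (Fin r) (Fin N) ℝ := Z * (1 - P) with hZpdef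
  set Q : Matrix (Fin N) (Fin N) ℝ := Zpd * Zp with hQ
  set Ξ : Matrix (Fin k ⊕ Fin r) (Fin N) ℝ := Matrix.fromRows Φ Z with hΞdef
  set R : Matrix (Fin N) (Fin N) ℝ := Ξd * Ξ with hR
  -- basic facts
  have hPP : P * P = P :=
    calc P * P = P * Φd * Φ := by rw [hP, ← Matrix.mul_assoc]
    _ = Φd * Φ := by rw [hΦ2]
    _ = P := hP.symm
  have hΦP : Φ * P = Φ := by
    rw [hP, ← Matrix.mul_assoc, hΦ1]
  have hZpP : Zp * P = 0 := by
    rw [hZpdef, Matrix.mul_assoc, Matrix.sub_mul, Matrix.one_mul, hPP, sub_self,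
      Matrix.mul_zero]
  have hQP : Q * P = 0 := by
    rw [hQ, Matrix.mul_assoc, hZpP, Matrix.mul_zero]
  have hPQ : P * Q = 0 := by
    have := congrArg Matrix.transpose hQP
    rwa [Matrix.transpose_mul, hΦ4, hZ4, Matrix.transpose_zero] at this
  -- Φ * Q = 0
  have hPΦT : P * Φᵀ = Φᵀ := by
    have := congrArg Matrix.transpose hΦP
    rwa [Matrix.transpose_mul, hΦ4] at this
  have hZpΦT : Zp * Φᵀ = 0 := by
    rw [hZpdef, Matrix.mul_assoc, Matrix.sub_mul, Matrix.one_mul, hPΦT, sub_self,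
      Matrix.mul_zero]
  have hΦQ : Φ * Q = 0 := by
    have h : Q * Φᵀ = 0 := by rw [hQ, Matrix.mul_assoc, hZpΦT, Matrix.mul_zero]
    have := congrArg Matrix.transpose h
    rwa [Matrix.transpose_mul, hZ4, Matrix.transpose_transpose, Matrix.transpose_zero] at this
  have hZpQ : Zp * Q = Zp := by
    rw [hQ, ← Matrix.mul_assoc, hZ1]
  have hZQ : Z * Q = Zp := by
    have h : Zp * Q = Z * Q := by
      rw [hZpdef, Matrix.mul_assoc, Matrix.sub_mul, Matrix.one_mul, hPQ, sub_zero]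
    rw [← h, hZpQ]
  -- Ξ * (P + Q) = Ξ
  have hΞPQ : Ξ * (P + Q) = Ξ := by
    rw [hΞdef, Matrix.fromRows_mul, Matrix.fromRows_inj.eq_iff]
    constructor
    · rw [Matrix.mul_add, hΦP, hΦQ, add_zero]
    · rw [Matrix.mul_add, hZQ, hZpdef, Matrix.mul_sub, Matrix.mul_one]
      abel
  have hRPQ : R * (P + Q) = R := by
    rw [hR, Matrix.mul_assoc, hΞPQ]
  -- Φ * R = Φ, Z * R = Z
  have hblocks : Matrix.fromRows (Φ * R) (Z * R) = Matrix.fromRows Φ Z := by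
    rw [hR, ← Matrix.mul_assoc, ← Matrix.mul_assoc, ← Matrix.fromRows_mul, ← Matrix.fromRows_mul,
      ← hΞdef, hΞ1]
  obtain ⟨hΦR, hZR⟩ := (Matrix.fromRows_inj.eq_iff).mp hblocks
  have hPR : P * R = P := by rw [hP, Matrix.mul_assoc, hΦR]
  have hZpR : Zp * R = Zp := by
    rw [hZpdef, Matrix.mul_assoc, Matrix.sub_mul, Matrix.one_mul, hPR, Matrix.mul_sub, hZR,
      Matrix.mul_sub, Matrix.mul_one]
  have hQR : Q * R = Q := by rw [hQ, Matrix.mul_assoc, hZpR]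
  have hPQR : (P + Q) * R = P + Q := by rw [Matrix.add_mul, hPR, hQR]
  -- R = P + Q
  have hRsym : Rᵀ = R := hΞ4
  have hPQsym : (P + Q)ᵀ = P + Q := by
    rw [Matrix.transpose_add, hΦ4, hQ, hZ4]
  have hRPQ' : R * (P + Q) = P + Q := by
    have := congrArg Matrix.transpose hPQR
    rwa [Matrix.transpose_mul, hRsym, hPQsym] at this
  have hReq : R = P + Q := by rw [← hRPQ, hRPQ']
  rw [hReq, Matrix.mul_sub, Matrix.mul_one, Matrix.sub_mul, Matrix.one_mul, hPQ, sub_zero]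
  abel
end

section
/- Let z⁻ ∈ ℝ^m and y = Cx + v with v zero-mean, Cov(v) = R ≻ 0, v uncorrelated with x and z⁻. Write Γ_xx = E[xxᵀ], Γ_xz = E[x z⁻ᵀ], Γ_zz = E[z⁻ z⁻ᵀ] ≻ 0, and define P⁻ = Γ_xx − Γ_xz Γ_zz⁻¹ Γ_zx, θ⁻ = Γ_xz Γ_zz⁻¹. Then the linear MMSE estimator of x given the stacked vector col(z⁻, y) is [(I − KC)θ⁻, K]·col(z⁻, y) with K = P⁻Cᵀ(CP⁻Cᵀ + R)⁻¹, and its residual covariance is (I − KC)P⁻. -/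
open Matrix MeasureTheory

/-!
The second moment of linear images `T F`, `U G` of square-integrable random vectors is
`T E[F Gᵀ] Uᵀ`. Writing `y = C x + v` as the image of `(x, v)`, and using that `v` is
uncorrelated with `x` and `z⁻`, gives `E[w wᵀ] = [[Γzz, Γzx Cᵀ], [C Γxz, C Γxx Cᵀ + R]]` and
`E[x wᵀ] = [Γxz, Γxx Cᵀ]` for `w = col(z⁻, y)`. The Schur complement of `Γzz` in `E[w wᵀ]` is
`C P⁻ Cᵀ + R`, which is positive definite because `P⁻`, the Schur complement of `Γzz` in the
second moment of `(x, z⁻)`, is positive semidefinite; so `E[w wᵀ]` is invertible. The gain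
`[(I - KC)θ⁻, K]` solves the normal equation `M E[w wᵀ] = E[x wᵀ]`, and for any solution the
residual `x - M w` is uncorrelated with `w`, so its second moment is
`Γxx - M E[x wᵀ]ᵀ = (I - KC)P⁻`.
-/

section BlockAlgebra

variable {α n m p : Type*} [CommRing α] [Fintype n] [Fintype m] [Fintype p]

theorem fromCols_one_neg_mul_fromBlocks_mul_transpose [DecidableEq n] {A : Matrix n n α}
    {B : Matrix n m α} {D : Matrix m m α} {M : Matrix n m α} (hM : M * D = B) :
    (fromCols 1 (-M) : Matrix n (n ⊕ m) α) * fromBlocks A B Bᵀ D *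
      (fromCols 1 (-M) : Matrix n (n ⊕ m) α)ᵀ = A - M * Bᵀ := by
  rw [fromCols_mul_fromBlocks, transpose_fromCols, fromCols_mul_fromRows, Matrix.neg_mul,
    Matrix.neg_mul, hM]
  simp [sub_eq_add_neg]

theorem kalman_gain_mul_fromBlocks [DecidableEq n] {Γxx P : Matrix n n α}
    {Γxz θ : Matrix n m α} {Γzz : Matrix m m α} {C : Matrix p n α} {R : Matrix p p α}
    {K : Matrix n p α} (hθ : θ * Γzz = Γxz) (hP : P = Γxx - θ * Γxzᵀ)
    (hK : K * (C * P * Cᵀ + R) = P * Cᵀ) :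
    fromCols ((1 - K * C) * θ) K * fromBlocks Γzz (Γxzᵀ * Cᵀ) (C * Γxz) (C * Γxx * Cᵀ + R) =
      fromCols Γxz (Γxx * Cᵀ) := by
  rw [fromCols_mul_fromBlocks, fromCols_ext_iff]
  constructor
  · rw [Matrix.mul_assoc, hθ, Matrix.sub_mul, Matrix.one_mul, Matrix.mul_assoc]
    abel
  · have hθΓ : θ * Γxzᵀ = Γxx - P := by rw [hP, sub_sub_cancel]
    calc (1 - K * C) * θ * (Γxzᵀ * Cᵀ) + K * (C * Γxx * Cᵀ + R)
        = Γxx * Cᵀ - P * Cᵀ + K * (C * P * Cᵀ + R) := by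
          rw [Matrix.mul_assoc, ← Matrix.mul_assoc θ, hθΓ]
          simp only [Matrix.sub_mul, Matrix.mul_sub, Matrix.one_mul, Matrix.mul_add,
            Matrix.mul_assoc]
          abel
      _ = Γxx * Cᵀ := by rw [hK, sub_add_cancel]

theorem kalman_residual_eq [DecidableEq n] {Γxx P : Matrix n n α} {Γxz θ : Matrix n m α}
    {C : Matrix p n α} {K : Matrix n p α} (hΓxx : Γxxᵀ = Γxx) (hP : P = Γxx - θ * Γxzᵀ) :
    Γxx - fromCols ((1 - K * C) * θ) K * (fromCols Γxz (Γxx * Cᵀ))ᵀ = (1 - K * C) * P := by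
  rw [transpose_fromCols, fromCols_mul_fromRows, transpose_mul, transpose_transpose, hΓxx, hP]
  simp only [Matrix.sub_mul, Matrix.mul_sub, Matrix.one_mul, Matrix.mul_assoc]
  abel

theorem isUnit_det_kalman_fromBlocks [DecidableEq m] [DecidableEq p] {Γxx P : Matrix n n α}
    {Γxz : Matrix n m α} {Γzz : Matrix m m α} {C : Matrix p n α} {R : Matrix p p α}
    (hΓzz : IsUnit Γzz.det) (hP : P = Γxx - Γxz * Γzz⁻¹ * Γxzᵀ)
    (hS : IsUnit (C * P * Cᵀ + R).det) :
    IsUnit (fromBlocks Γzz (Γxzᵀ * Cᵀ) (C * Γxz) (C * Γxx * Cᵀ + R)).det := by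
  let := Γzz.invertibleOfIsUnitDet hΓzz
  have hschur : C * Γxx * Cᵀ + R - C * Γxz * ⅟Γzz * (Γxzᵀ * Cᵀ) = C * P * Cᵀ + R := by
    rw [invOf_eq_nonsing_inv, hP]
    simp only [Matrix.mul_sub, Matrix.sub_mul, Matrix.mul_assoc]
    abel
  rw [det_fromBlocks₁₁, hschur]
  exact hΓzz.mul hS

end BlockAlgebra

section SecondMoment

variable {Ω ι κ ι' κ' : Type*} [MeasurableSpace Ω] {μ : Measure Ω}

noncomputable def secondMoment (μ : Measure Ω) (F : Ω → ι → ℝ) (G : Ω → κ → ℝ) : Matrix ι κ ℝ :=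
  Matrix.of fun i j => ∫ ω, F ω i * G ω j ∂μ

theorem secondMoment_transpose (F : Ω → ι → ℝ) (G : Ω → κ → ℝ) :
    (secondMoment μ F G)ᵀ = secondMoment μ G F := by
  ext i j
  simp only [secondMoment, transpose_apply, of_apply, mul_comm]

theorem secondMoment_sumElim_right (F : Ω → ι → ℝ) (G₁ : Ω → κ → ℝ) (G₂ : Ω → κ' → ℝ) :
    secondMoment μ F (fun ω => Sum.elim (G₁ ω) (G₂ ω)) =
      fromCols (secondMoment μ F G₁) (secondMoment μ F G₂) := by
  ext i (j | j) <;> rfl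

theorem secondMoment_sumElim (F₁ : Ω → ι → ℝ) (F₂ : Ω → ι' → ℝ) (G₁ : Ω → κ → ℝ)
    (G₂ : Ω → κ' → ℝ) :
    secondMoment μ (fun ω => Sum.elim (F₁ ω) (F₂ ω)) (fun ω => Sum.elim (G₁ ω) (G₂ ω)) =
      fromBlocks (secondMoment μ F₁ G₁) (secondMoment μ F₁ G₂)
        (secondMoment μ F₂ G₁) (secondMoment μ F₂ G₂) := by
  ext (i | i) (j | j) <;> rfl

theorem memLp_sumElim {F : Ω → ι → ℝ} {G : Ω → κ → ℝ}
    (hF : ∀ i, MemLp (fun ω => F ω i) 2 μ) (hG : ∀ j, MemLp (fun ω => G ω j) 2 μ) :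
    ∀ k, MemLp (fun ω => Sum.elim (F ω) (G ω) k) 2 μ
  | .inl i => hF i
  | .inr j => hG j

theorem memLp_mulVec_add [Fintype ι] {x : Ω → ι → ℝ} {v : Ω → κ → ℝ}
    (hx : ∀ i, MemLp (fun ω => x ω i) 2 μ) (hv : ∀ k, MemLp (fun ω => v ω k) 2 μ)
    (C : Matrix κ ι ℝ) (k : κ) : MemLp (fun ω => (C *ᵥ x ω + v ω) k) 2 μ := by
  simp only [Pi.add_apply, mulVec, dotProduct]
  exact (memLp_finsetSum _ fun i _ => (hx i).const_mul (C k i)).add (hv k)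

theorem secondMoment_mulVec [Fintype ι] [Fintype κ] {F : Ω → ι → ℝ} {G : Ω → κ → ℝ}
    (hF : ∀ i, MemLp (fun ω => F ω i) 2 μ) (hG : ∀ j, MemLp (fun ω => G ω j) 2 μ)
    (T : Matrix ι' ι ℝ) (U : Matrix κ' κ ℝ) :
    secondMoment μ (fun ω => T *ᵥ F ω) (fun ω => U *ᵥ G ω) = T * secondMoment μ F G * Uᵀ := by
  have hFG (i : ι) (j : κ) : Integrable (fun ω => F ω i * G ω j) μ :=
    (hF i).integrable_mul (hG j)
  ext a b
  have hexpand (ω : Ω) : (T *ᵥ F ω) a * (U *ᵥ G ω) b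
      = ∑ i, ∑ j, T a i * U b j * (F ω i * G ω j) := by
    simp only [mulVec, dotProduct, Finset.sum_mul_sum]
    exact Finset.sum_congr rfl fun i _ => Finset.sum_congr rfl fun j _ => by ring
  simp only [secondMoment, of_apply, hexpand]
  rw [integral_finsetSum _ fun i _ => integrable_finsetSum _ fun j _ => (hFG i j).const_mul _]
  simp only [mul_apply, transpose_apply, of_apply, Finset.sum_mul]
  rw [Finset.sum_comm]
  refine Finset.sum_congr rfl fun i _ => ?_
  rw [integral_finsetSum _ fun j _ => (hFG i j).const_mul _]
  exact Finset.sum_congr rfl fun j _ => by rw [integral_const_mul]; ring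

theorem secondMoment_posSemidef [Fintype ι] {F : Ω → ι → ℝ}
    (hF : ∀ i, MemLp (fun ω => F ω i) 2 μ) : (secondMoment μ F F).PosSemidef := by
  refine posSemidef_iff_dotProduct_mulVec.2 ⟨?_, fun a => ?_⟩
  · rw [IsHermitian, conjTranspose_eq_transpose_of_trivial, secondMoment_transpose]
  · have hq : star a ⬝ᵥ secondMoment μ F F *ᵥ a
        = (replicateRow (Fin 1) a * secondMoment μ F F * (replicateRow (Fin 1) a)ᵀ) 0 0 := by
      simp only [mul_apply, replicateRow_apply, transpose_apply, dotProduct, mulVec, star_trivial,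
        Finset.sum_mul, Finset.mul_sum]
      rw [Finset.sum_comm]
      exact Finset.sum_congr rfl fun i _ => Finset.sum_congr rfl fun j _ => by ring
    rw [hq, ← secondMoment_mulVec hF hF]
    exact integral_nonneg fun ω => mul_self_nonneg _

theorem secondMoment_mulVec_add_right [Fintype κ] [Fintype ι] [Fintype ι']
    {G : Ω → κ → ℝ} {x : Ω → ι → ℝ} {v : Ω → ι' → ℝ}
    (hG : ∀ k, MemLp (fun ω => G ω k) 2 μ) (hx : ∀ i, MemLp (fun ω => x ω i) 2 μ)
    (hv : ∀ i, MemLp (fun ω => v ω i) 2 μ) (C : Matrix ι' ι ℝ) :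
    secondMoment μ G (fun ω => C *ᵥ x ω + v ω) =
      secondMoment μ G x * Cᵀ + secondMoment μ G v := by
  classical
  have hy : (fun ω => C *ᵥ x ω + v ω) = fun ω =>
      (fromCols C 1 : Matrix ι' (ι ⊕ ι') ℝ) *ᵥ Sum.elim (x ω) (v ω) := by
    funext ω
    rw [fromCols_mulVec_sumElim, one_mulVec]
  have h := secondMoment_mulVec hG (memLp_sumElim hx hv) (1 : Matrix κ κ ℝ)
    (fromCols C 1 : Matrix ι' (ι ⊕ ι') ℝ)
  simp only [one_mulVec, Matrix.one_mul] at h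
  rw [hy, h, secondMoment_sumElim_right, transpose_fromCols, fromCols_mul_fromRows,
    transpose_one, Matrix.mul_one]

theorem secondMoment_mulVec_add_left [Fintype κ] [Fintype ι] [Fintype ι']
    {G : Ω → κ → ℝ} {x : Ω → ι → ℝ} {v : Ω → ι' → ℝ}
    (hG : ∀ k, MemLp (fun ω => G ω k) 2 μ) (hx : ∀ i, MemLp (fun ω => x ω i) 2 μ)
    (hv : ∀ i, MemLp (fun ω => v ω i) 2 μ) (C : Matrix ι' ι ℝ) :
    secondMoment μ (fun ω => C *ᵥ x ω + v ω) G =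
      C * secondMoment μ x G + secondMoment μ v G := by
  rw [← secondMoment_transpose, secondMoment_mulVec_add_right hG hx hv, transpose_add,
    transpose_mul, transpose_transpose, secondMoment_transpose, secondMoment_transpose]

theorem secondMoment_sub_mulVec_of_mul_eq [Fintype ι] [Fintype κ]
    {x : Ω → ι → ℝ} {w : Ω → κ → ℝ}
    (hx : ∀ i, MemLp (fun ω => x ω i) 2 μ) (hw : ∀ k, MemLp (fun ω => w ω k) 2 μ)
    {M : Matrix ι κ ℝ} (hM : M * secondMoment μ w w = secondMoment μ x w) :
    secondMoment μ (fun ω => x ω - M *ᵥ w ω) (fun ω => x ω - M *ᵥ w ω) =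
      secondMoment μ x x - M * (secondMoment μ x w)ᵀ := by
  classical
  have he : (fun ω => x ω - M *ᵥ w ω) = fun ω =>
      (fromCols 1 (-M) : Matrix ι (ι ⊕ κ) ℝ) *ᵥ Sum.elim (x ω) (w ω) := by
    funext ω
    rw [fromCols_mulVec_sumElim, one_mulVec, neg_mulVec, sub_eq_add_neg]
  rw [he, secondMoment_mulVec (memLp_sumElim hx hw) (memLp_sumElim hx hw),
    secondMoment_sumElim, ← secondMoment_transpose x w,
    fromCols_one_neg_mul_fromBlocks_mul_transpose hM]

theorem secondMoment_sub_mul_inv_mul_transpose_posSemidef [Fintype ι] [Fintype κ]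
    [DecidableEq κ] {x : Ω → ι → ℝ} {z : Ω → κ → ℝ}
    (hx : ∀ i, MemLp (fun ω => x ω i) 2 μ) (hz : ∀ k, MemLp (fun ω => z ω k) 2 μ)
    (hzz : (secondMoment μ z z).PosDef) :
    (secondMoment μ x x -
      secondMoment μ x z * (secondMoment μ z z)⁻¹ * (secondMoment μ x z)ᵀ).PosSemidef := by
  let := hzz.isUnit.invertible
  have h := secondMoment_posSemidef (μ := μ) (memLp_sumElim hx hz)
  rw [secondMoment_sumElim, ← secondMoment_transpose x z,
    ← conjTranspose_eq_transpose_of_trivial, PosDef.fromBlocks₂₂ _ _ hzz] at h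
  rwa [← conjTranspose_eq_transpose_of_trivial]

section Measurement

variable [Fintype ι] [Fintype ι'] {x : Ω → ι → ℝ} {z : Ω → κ → ℝ} {v : Ω → ι' → ℝ}

theorem secondMoment_sumElim_mulVec_add_right (hx : ∀ i, MemLp (fun ω => x ω i) 2 μ)
    (hv : ∀ i, MemLp (fun ω => v ω i) 2 μ) (hvx : secondMoment μ v x = 0) (C : Matrix ι' ι ℝ) :
    secondMoment μ x (fun ω => Sum.elim (z ω) (C *ᵥ x ω + v ω)) =
      fromCols (secondMoment μ x z) (secondMoment μ x x * Cᵀ) := by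
  rw [secondMoment_sumElim_right, secondMoment_mulVec_add_right hx hx hv,
    ← secondMoment_transpose v, hvx, transpose_zero, add_zero]

theorem secondMoment_sumElim_mulVec_add [Fintype κ] (hx : ∀ i, MemLp (fun ω => x ω i) 2 μ)
    (hz : ∀ k, MemLp (fun ω => z ω k) 2 μ) (hv : ∀ i, MemLp (fun ω => v ω i) 2 μ)
    (hvx : secondMoment μ v x = 0) (hvz : secondMoment μ v z = 0) (C : Matrix ι' ι ℝ) :
    secondMoment μ (fun ω => Sum.elim (z ω) (C *ᵥ x ω + v ω))
        (fun ω => Sum.elim (z ω) (C *ᵥ x ω + v ω)) =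
      fromBlocks (secondMoment μ z z) ((secondMoment μ x z)ᵀ * Cᵀ) (C * secondMoment μ x z)
        (C * secondMoment μ x x * Cᵀ + secondMoment μ v v) := by
  have hzy : secondMoment μ z (fun ω => C *ᵥ x ω + v ω) = (secondMoment μ x z)ᵀ * Cᵀ := by
    rw [secondMoment_mulVec_add_right hz hx hv, ← secondMoment_transpose v, hvz,
      secondMoment_transpose, transpose_zero, add_zero]
  have hyy : secondMoment μ (fun ω => C *ᵥ x ω + v ω) (fun ω => C *ᵥ x ω + v ω) =
      C * secondMoment μ x x * Cᵀ + secondMoment μ v v := by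
    rw [secondMoment_mulVec_add_left (memLp_mulVec_add hx hv C) hx hv,
      secondMoment_mulVec_add_right hx hx hv, secondMoment_mulVec_add_right hv hx hv,
      ← secondMoment_transpose v x, hvx, transpose_zero, add_zero, Matrix.zero_mul, zero_add,
      Matrix.mul_assoc]
  rw [secondMoment_sumElim, hyy, ← secondMoment_transpose z (fun ω => C *ᵥ x ω + v ω), hzy,
    transpose_mul, transpose_transpose, transpose_transpose]

end Measurement

end SecondMoment

theorem stmt10_general {n m p : ℕ} {Ω : Type*} [MeasureSpace Ω] (μ : Measure Ω)
    (x : Ω → Fin n → ℝ) (z : Ω → Fin m → ℝ) (v : Ω → Fin p → ℝ)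
    (C : Matrix (Fin p) (Fin n) ℝ) (R : Matrix (Fin p) (Fin p) ℝ)
    (y : Ω → Fin p → ℝ) (hy : y = fun ω => C *ᵥ x ω + v ω)
    (hx2 : ∀ i, MemLp (fun ω => x ω i) 2 μ)
    (hz2 : ∀ j, MemLp (fun ω => z ω j) 2 μ)
    (hv2 : ∀ i, MemLp (fun ω => v ω i) 2 μ)
    (hR : ∀ i j, R i j = ∫ ω, v ω i * v ω j ∂μ) (hRPD : R.PosDef)
    (hvx : ∀ i j, ∫ ω, v ω i * x ω j ∂μ = 0)
    (hvz : ∀ i j, ∫ ω, v ω i * z ω j ∂μ = 0)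
    (Γxx : Matrix (Fin n) (Fin n) ℝ) (hΓxx : ∀ i j, Γxx i j = ∫ ω, x ω i * x ω j ∂μ)
    (Γxz : Matrix (Fin n) (Fin m) ℝ) (hΓxz : ∀ i j, Γxz i j = ∫ ω, x ω i * z ω j ∂μ)
    (Γzz : Matrix (Fin m) (Fin m) ℝ) (hΓzz : ∀ i j, Γzz i j = ∫ ω, z ω i * z ω j ∂μ)
    (hΓzzPD : Γzz.PosDef)
    (Pm : Matrix (Fin n) (Fin n) ℝ) (hPm : Pm = Γxx - Γxz * Γzz⁻¹ * Γxzᵀ)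
    (θm : Matrix (Fin n) (Fin m) ℝ) (hθm : θm = Γxz * Γzz⁻¹)
    (K : Matrix (Fin n) (Fin p) ℝ) (hK : K = Pm * Cᵀ * (C * Pm * Cᵀ + R)⁻¹)
    (Γxw : Matrix (Fin n) (Fin m ⊕ Fin p) ℝ)
    (hΓxw : ∀ i j, Γxw i j = ∫ ω, x ω i * (Sum.elim (z ω) (y ω)) j ∂μ)
    (Γww : Matrix (Fin m ⊕ Fin p) (Fin m ⊕ Fin p) ℝ)
    (hΓww : ∀ i j, Γww i j = ∫ ω, (Sum.elim (z ω) (y ω)) i * (Sum.elim (z ω) (y ω)) j ∂μ) :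
    Γxw * Γww⁻¹ = Matrix.fromCols ((1 - K * C) * θm) K ∧
    (∀ i j, ∫ ω, (x ω i - ((Γxw * Γww⁻¹) *ᵥ Sum.elim (z ω) (y ω)) i)
        * (x ω j - ((Γxw * Γww⁻¹) *ᵥ Sum.elim (z ω) (y ω)) j) ∂μ
      = ((1 - K * C) * Pm : Matrix (Fin n) (Fin n) ℝ) i j) := by
  subst hy
  obtain rfl : Γxx = secondMoment μ x x := Matrix.ext hΓxx
  obtain rfl : Γxz = secondMoment μ x z := Matrix.ext hΓxz
  obtain rfl : Γzz = secondMoment μ z z := Matrix.ext hΓzz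
  obtain rfl : R = secondMoment μ v v := Matrix.ext hR
  set w : Ω → Fin m ⊕ Fin p → ℝ := fun ω => Sum.elim (z ω) (C *ᵥ x ω + v ω)
  obtain rfl : Γxw = secondMoment μ x w := Matrix.ext hΓxw
  obtain rfl : Γww = secondMoment μ w w := Matrix.ext hΓww
  have hxw : secondMoment μ x w = fromCols (secondMoment μ x z) (secondMoment μ x x * Cᵀ) :=
    secondMoment_sumElim_mulVec_add_right hx2 hv2 (Matrix.ext hvx) C
  have hww := secondMoment_sumElim_mulVec_add hx2 hz2 hv2 (Matrix.ext hvx) (Matrix.ext hvz) C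
  have hΓzz : IsUnit (secondMoment μ z z).det := (isUnit_iff_isUnit_det _).1 hΓzzPD.isUnit
  have hS : IsUnit (C * Pm * Cᵀ + secondMoment μ v v).det := by
    have hPmPSD := hPm ▸ secondMoment_sub_mul_inv_mul_transpose_posSemidef hx2 hz2 hΓzzPD
    refine (isUnit_iff_isUnit_det _).1 (PosDef.posSemidef_add ?_ hRPD).isUnit
    simpa only [conjTranspose_eq_transpose_of_trivial] using hPmPSD.mul_mul_conjTranspose_same C
  have hPθ : Pm = secondMoment μ x x - θm * (secondMoment μ x z)ᵀ := by rw [hPm, hθm]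
  have hnormal : fromCols ((1 - K * C) * θm) K * secondMoment μ w w = secondMoment μ x w := by
    rw [hww, hxw]
    exact kalman_gain_mul_fromBlocks (hθm ▸ nonsing_inv_mul_cancel_right _ _ hΓzz) hPθ
      (hK ▸ nonsing_inv_mul_cancel_right _ _ hS)
  have hgain : secondMoment μ x w * (secondMoment μ w w)⁻¹ = fromCols ((1 - K * C) * θm) K := by
    rw [← hnormal, mul_nonsing_inv_cancel_right]
    exact hww ▸ isUnit_det_kalman_fromBlocks hΓzz hPm hS
  refine ⟨hgain, fun i j => ?_⟩
  rw [hgain]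
  change secondMoment μ (fun ω => x ω - _ *ᵥ w ω) (fun ω => x ω - _ *ᵥ w ω) i j = _
  rw [secondMoment_sub_mulVec_of_mul_eq hx2 (memLp_sumElim hz2 (memLp_mulVec_add hx2 hv2 C))
      hnormal, hxw, kalman_residual_eq (secondMoment_transpose x x) hPθ]

/-- Kalman measurement update as a linear MMSE estimator.  With
`y = Cx + v`, `v` zero-mean with covariance `R ≻ 0` uncorrelated with `x` and `z⁻`,
`P⁻ = Γxx − Γxz Γzz⁻¹ Γzx` and `θ⁻ = Γxz Γzz⁻¹`, the linear MMSE estimator of `x`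
given `w = col(z⁻, y)`, namely `E[xwᵀ] E[wwᵀ]⁻¹ w`, has coefficient matrix
`[(I − KC)θ⁻, K]` with `K = P⁻Cᵀ(CP⁻Cᵀ + R)⁻¹`, and residual covariance `(I − KC)P⁻`. -/
theorem stmt10 {n m p : ℕ} {Ω : Type*} [MeasureSpace Ω] (μ : Measure Ω)
    [IsProbabilityMeasure μ]
    (x : Ω → Fin n → ℝ) (z : Ω → Fin m → ℝ) (v : Ω → Fin p → ℝ)
    (C : Matrix (Fin p) (Fin n) ℝ) (R : Matrix (Fin p) (Fin p) ℝ)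
    (y : Ω → Fin p → ℝ) (hy : y = fun ω => C *ᵥ x ω + v ω)
    (hx2 : ∀ i, MemLp (fun ω => x ω i) 2 μ)
    (hz2 : ∀ j, MemLp (fun ω => z ω j) 2 μ)
    (hv2 : ∀ i, MemLp (fun ω => v ω i) 2 μ)
    (hxm : ∀ i, ∫ ω, x ω i ∂μ = 0) (hzm : ∀ j, ∫ ω, z ω j ∂μ = 0)
    (hvm : ∀ i, ∫ ω, v ω i ∂μ = 0)
    (hR : ∀ i j, R i j = ∫ ω, v ω i * v ω j ∂μ) (hRPD : R.PosDef)
    (hvx : ∀ i j, ∫ ω, v ω i * x ω j ∂μ = 0)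
    (hvz : ∀ i j, ∫ ω, v ω i * z ω j ∂μ = 0)
    (Γxx : Matrix (Fin n) (Fin n) ℝ) (hΓxx : ∀ i j, Γxx i j = ∫ ω, x ω i * x ω j ∂μ)
    (Γxz : Matrix (Fin n) (Fin m) ℝ) (hΓxz : ∀ i j, Γxz i j = ∫ ω, x ω i * z ω j ∂μ)
    (Γzz : Matrix (Fin m) (Fin m) ℝ) (hΓzz : ∀ i j, Γzz i j = ∫ ω, z ω i * z ω j ∂μ)
    (hΓzzPD : Γzz.PosDef)
    (Pm : Matrix (Fin n) (Fin n) ℝ) (hPm : Pm = Γxx - Γxz * Γzz⁻¹ * Γxzᵀ)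
    (θm : Matrix (Fin n) (Fin m) ℝ) (hθm : θm = Γxz * Γzz⁻¹)
    (K : Matrix (Fin n) (Fin p) ℝ) (hK : K = Pm * Cᵀ * (C * Pm * Cᵀ + R)⁻¹)
    (Γxw : Matrix (Fin n) (Fin m ⊕ Fin p) ℝ)
    (hΓxw : ∀ i j, Γxw i j = ∫ ω, x ω i * (Sum.elim (z ω) (y ω)) j ∂μ)
    (Γww : Matrix (Fin m ⊕ Fin p) (Fin m ⊕ Fin p) ℝ)
    (hΓww : ∀ i j, Γww i j = ∫ ω, (Sum.elim (z ω) (y ω)) i * (Sum.elim (z ω) (y ω)) j ∂μ) :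
    Γxw * Γww⁻¹ = Matrix.fromCols ((1 - K * C) * θm) K ∧
    (∀ i j, ∫ ω, (x ω i - ((Γxw * Γww⁻¹) *ᵥ Sum.elim (z ω) (y ω)) i)
        * (x ω j - ((Γxw * Γww⁻¹) *ᵥ Sum.elim (z ω) (y ω)) j) ∂μ
      = ((1 - K * C) * Pm : Matrix (Fin n) (Fin n) ℝ) i j) :=
  stmt10_general μ x z v C R y hy hx2 hz2 hv2 hR hRPD hvx hvz Γxx hΓxx Γxz hΓxz Γzz hΓzz hΓzzPD Pm
    hPm θm hθm K hK Γxw hΓxw Γww hΓww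
end

section
/- Let P* ≻ 0 satisfy the Lyapunov-type identity P* = Ãᵀ P* Ã + S with S ≻ 0, and let V(χ) = χᵀ P* χ. Suppose a sequence χ_{t+1} = Ã_t χ_t + d_t with ‖Ã_tᵀP*Ã_t − ÃᵀP*Ã‖ ≤ L₁ρᵗ and ‖d_t‖ ≤ L₂ρᵗ for constants L₁, L₂ > 0, 0 < ρ < 1. Then there exist constants L₄ > 0 and ρ̄ ∈ (0,1) such that ‖χ_t‖ ≤ L₄ ρ̄ᵗ for all sufficiently large t. -/
/-! The Lyapunov identity makes the energy norm `‖x‖_P = √(xᵀ P* x)` one in which `Ã` is a strict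
contraction: `xᵀ Ãᵀ P* Ã x = xᵀ P* x - xᵀ S x ≤ (1 - θ) xᵀ P* x`. Since `Ã_tᵀ P* Ã_t → Ãᵀ P* Ã`, the
matrices `Ã_t` are eventually contractions for the same norm with a uniform factor `r < 1`, so
`w_t = ‖χ_t‖_P` obeys `w_{t+1} ≤ r w_t + C ρᵗ`, which forces geometric decay at any rate in
`(max r ρ, 1)`. Equivalence of norms in finite dimension transfers this to `‖χ_t‖`. -/

open Matrix Filter Topology

attribute [local instance] Matrix.normedAddCommGroup

theorem exists_le_mul_pow_of_le_mul_add_mul_pow {w : ℕ → ℝ} {r D ρ : ℝ} {T : ℕ}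
    (hr0 : 0 ≤ r) (hr1 : r < 1) (hD : 0 ≤ D) (hρ0 : 0 ≤ ρ) (hρ1 : ρ < 1)
    (hw : ∀ t ≥ T, w (t + 1) ≤ r * w t + D * ρ ^ t) :
    ∃ M σ, 0 < M ∧ 0 < σ ∧ σ < 1 ∧ ∀ t ≥ T, w t ≤ M * σ ^ t := by
  set σ := (1 + max r ρ) / 2 with hσ
  have hrσ : r < σ := by linarith [le_max_left r ρ]
  have hρσ : ρ ≤ σ := by linarith [le_max_right r ρ]
  have hσ1 : σ < 1 := by linarith [max_lt hr1 hρ1]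
  have hσ0 : 0 < σ := by linarith
  -- `D ≤ (σ - r) M` makes `M σᵗ` a supersolution of the recursion.
  set M := max (w T / σ ^ T) (D / (σ - r)) + 1 with hMdef
  have hwT : w T / σ ^ T ≤ M := by linarith [le_max_left (w T / σ ^ T) (D / (σ - r))]
  have hDM : D / (σ - r) ≤ M := by linarith [le_max_right (w T / σ ^ T) (D / (σ - r))]
  have hM : 0 < M := by
    linarith [div_nonneg hD (sub_nonneg.2 hrσ.le), le_max_right (w T / σ ^ T) (D / (σ - r))]
  refine ⟨M, σ, hM, hσ0, hσ1, fun t ht => ?_⟩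
  induction t, ht using Nat.le_induction with
  | base => exact (div_le_iff₀ (by positivity)).1 hwT
  | succ t ht ih =>
    have hD' : D ≤ (σ - r) * M := by rwa [div_le_iff₀' (by linarith)] at hDM
    calc w (t + 1) ≤ r * w t + D * ρ ^ t := hw t ht
      _ ≤ r * (M * σ ^ t) + D * σ ^ t := by gcongr
      _ ≤ r * (M * σ ^ t) + (σ - r) * M * σ ^ t := by gcongr
      _ = M * σ ^ (t + 1) := by ring

namespace Matrix

variable {ι : Type*} [Fintype ι]

theorem abs_dotProduct_mulVec_le (M : Matrix ι ι ℝ) (x : ι → ℝ) :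
    |x ⬝ᵥ (M *ᵥ x)| ≤ Fintype.card ι ^ 2 * ‖M‖ * ‖x‖ ^ 2 := by
  have hentry (i j : ι) : |x i * (M i j * x j)| ≤ ‖x‖ * (‖M‖ * ‖x‖) := by
    simp only [abs_mul, ← Real.norm_eq_abs]
    gcongr
    exacts [norm_le_pi_norm x i, norm_entry_le_entrywise_sup_norm M, norm_le_pi_norm x j]
  calc |x ⬝ᵥ (M *ᵥ x)| = |∑ i, ∑ j, x i * (M i j * x j)| := by
        simp only [dotProduct, mulVec, Finset.mul_sum]
    _ ≤ ∑ i, ∑ j, |x i * (M i j * x j)| :=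
        (Finset.abs_sum_le_sum_abs _ _).trans
          (Finset.sum_le_sum fun i _ => Finset.abs_sum_le_sum_abs _ _)
    _ ≤ ∑ _i : ι, ∑ _j : ι, ‖x‖ * (‖M‖ * ‖x‖) :=
        Finset.sum_le_sum fun i _ => Finset.sum_le_sum fun j _ => hentry i j
    _ = Fintype.card ι ^ 2 * ‖M‖ * ‖x‖ ^ 2 := by
        simp only [Finset.sum_const, Finset.card_univ, nsmul_eq_mul]; ring

theorem dotProduct_mulVec_transpose_mul_mul (A P : Matrix ι ι ℝ) (x : ι → ℝ) :
    x ⬝ᵥ ((Aᵀ * P * A) *ᵥ x) = (A *ᵥ x) ⬝ᵥ (P *ᵥ (A *ᵥ x)) := by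
  rw [← mulVec_mulVec, ← mulVec_mulVec, dotProduct_mulVec, vecMul_transpose]

namespace PosDef

variable {P : Matrix ι ι ℝ}

theorem exists_pos_mul_norm_sq_le (hP : P.PosDef) :
    ∃ c, 0 < c ∧ ∀ x : ι → ℝ, c * ‖x‖ ^ 2 ≤ x ⬝ᵥ (P *ᵥ x) := by
  rcases isEmpty_or_nonempty ι with hι | hι
  · exact ⟨1, one_pos, fun x => by simp [Subsingleton.elim x 0]⟩
  obtain ⟨u, hu, hmin⟩ := (isCompact_sphere (0 : ι → ℝ) 1).exists_isMinOn
    (NormedSpace.sphere_nonempty.2 zero_le_one)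
    (by fun_prop : Continuous fun x => x ⬝ᵥ (P *ᵥ x)).continuousOn
  have hu0 : u ≠ 0 := ne_zero_of_mem_unit_sphere ⟨u, hu⟩
  refine ⟨u ⬝ᵥ (P *ᵥ u), by simpa using hP.dotProduct_mulVec_pos hu0, fun x => ?_⟩
  rcases eq_or_ne x 0 with rfl | hx
  · simp
  have hx' : 0 < ‖x‖ := norm_pos_iff.2 hx
  have hmin_x : u ⬝ᵥ (P *ᵥ u) ≤ ‖x‖⁻¹ * (‖x‖⁻¹ * x ⬝ᵥ (P *ᵥ x)) := by
    have hxs : ‖x‖⁻¹ • x ∈ Metric.sphere (0 : ι → ℝ) 1 := by simp [norm_smul, hx'.ne']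
    simpa [mulVec_smul] using hmin hxs
  calc u ⬝ᵥ (P *ᵥ u) * ‖x‖ ^ 2 ≤ ‖x‖⁻¹ * (‖x‖⁻¹ * x ⬝ᵥ (P *ᵥ x)) * ‖x‖ ^ 2 := by gcongr
    _ = x ⬝ᵥ (P *ᵥ x) := by field_simp

theorem exists_abs_dotProduct_mulVec_le (hP : P.PosDef) :
    ∃ K, 0 ≤ K ∧ ∀ (M : Matrix ι ι ℝ) (x : ι → ℝ),
      |x ⬝ᵥ (M *ᵥ x)| ≤ K * ‖M‖ * (x ⬝ᵥ (P *ᵥ x)) := by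
  obtain ⟨c, hc, hcP⟩ := hP.exists_pos_mul_norm_sq_le
  refine ⟨Fintype.card ι ^ 2 / c, by positivity, fun M x => ?_⟩
  calc |x ⬝ᵥ (M *ᵥ x)| ≤ Fintype.card ι ^ 2 * ‖M‖ * ‖x‖ ^ 2 := abs_dotProduct_mulVec_le M x
    _ = Fintype.card ι ^ 2 / c * ‖M‖ * (c * ‖x‖ ^ 2) := by field_simp
    _ ≤ Fintype.card ι ^ 2 / c * ‖M‖ * (x ⬝ᵥ (P *ᵥ x)) := by gcongr; exact hcP x

theorem exists_pos_mul_dotProduct_mulVec_le {S : Matrix ι ι ℝ} (hS : S.PosDef)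
    (P : Matrix ι ι ℝ) :
    ∃ θ, 0 < θ ∧ ∀ x : ι → ℝ, θ * (x ⬝ᵥ (P *ᵥ x)) ≤ x ⬝ᵥ (S *ᵥ x) := by
  obtain ⟨K, hK, hKS⟩ := hS.exists_abs_dotProduct_mulVec_le
  refine ⟨(K * ‖P‖ + 1)⁻¹, by positivity, fun x => ?_⟩
  have hSx : 0 ≤ x ⬝ᵥ (S *ᵥ x) := by simpa using hS.posSemidef.dotProduct_mulVec_nonneg x
  rw [inv_mul_le_iff₀ (by positivity)]
  calc x ⬝ᵥ (P *ᵥ x) ≤ K * ‖P‖ * (x ⬝ᵥ (S *ᵥ x)) := (le_abs_self _).trans (hKS P x)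
    _ ≤ (K * ‖P‖ + 1) * (x ⬝ᵥ (S *ᵥ x)) := by nlinarith

end PosDef

noncomputable def energyNorm (P : Matrix ι ι ℝ) (x : ι → ℝ) : ℝ := √(x ⬝ᵥ (P *ᵥ x))

theorem energyNorm_le (P : Matrix ι ι ℝ) (x : ι → ℝ) :
    P.energyNorm x ≤ Fintype.card ι * √‖P‖ * ‖x‖ := by
  calc P.energyNorm x ≤ √(Fintype.card ι ^ 2 * ‖P‖ * ‖x‖ ^ 2) :=
        Real.sqrt_le_sqrt ((le_abs_self _).trans (abs_dotProduct_mulVec_le P x))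
    _ = Fintype.card ι * √‖P‖ * ‖x‖ := by
        rw [Real.sqrt_mul (by positivity), Real.sqrt_mul (by positivity),
          Real.sqrt_sq (by positivity), Real.sqrt_sq (norm_nonneg x)]

theorem PosSemidef.energyNorm_add_le {P : Matrix ι ι ℝ} (hP : P.PosSemidef) (u v : ι → ℝ) :
    P.energyNorm (u + v) ≤ P.energyNorm u + P.energyNorm v := by
  have hnorm (x : ι → ℝ) :
      @norm _ (P.toSeminormedAddCommGroup hP).toNorm x = P.energyNorm x := by
    change √(RCLike.re ((P *ᵥ x) ⬝ᵥ star x)) = _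
    rw [energyNorm, dotProduct_comm]
    rfl
  simpa only [hnorm] using @norm_add_le _ (P.toSeminormedAddCommGroup hP).toSeminormedAddGroup u v

theorem PosDef.exists_norm_le_mul_energyNorm {P : Matrix ι ι ℝ} (hP : P.PosDef) :
    ∃ c, 0 < c ∧ ∀ x : ι → ℝ, ‖x‖ ≤ c * P.energyNorm x := by
  obtain ⟨c, hc, hcP⟩ := hP.exists_pos_mul_norm_sq_le
  refine ⟨(√c)⁻¹, by positivity, fun x => ?_⟩
  rw [inv_mul_eq_div, le_div_iff₀ (by positivity), energyNorm, ← Real.sqrt_sq (norm_nonneg x),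
    ← Real.sqrt_mul (sq_nonneg _), mul_comm]
  exact Real.sqrt_le_sqrt (hcP x)

theorem PosSemidef.energyNorm_mulVec_le {P B : Matrix ι ι ℝ} (hP : P.PosSemidef) {q : ℝ}
    (hB : ∀ x, (B *ᵥ x) ⬝ᵥ (P *ᵥ (B *ᵥ x)) ≤ q * (x ⬝ᵥ (P *ᵥ x))) (x : ι → ℝ) :
    P.energyNorm (B *ᵥ x) ≤ √q * P.energyNorm x := by
  rw [energyNorm, energyNorm, ← Real.sqrt_mul' q (by simpa using hP.dotProduct_mulVec_nonneg x)]
  exact Real.sqrt_le_sqrt (hB x)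

theorem eventually_dotProduct_mulVec_le_of_lyapunov {A P S : Matrix ι ι ℝ}
    {B : ℕ → Matrix ι ι ℝ} (hP : P.PosDef) (hS : S.PosDef) (hLyap : P = Aᵀ * P * A + S)
    (hB : Tendsto (fun t => ‖(B t)ᵀ * P * B t - Aᵀ * P * A‖) atTop (𝓝 0)) :
    ∃ q < 1, ∀ᶠ t in atTop, ∀ x,
      (B t *ᵥ x) ⬝ᵥ (P *ᵥ (B t *ᵥ x)) ≤ q * (x ⬝ᵥ (P *ᵥ x)) := by
  obtain ⟨θ, hθ, hθS⟩ := hS.exists_pos_mul_dotProduct_mulVec_le P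
  obtain ⟨K, -, hKP⟩ := hP.exists_abs_dotProduct_mulVec_le
  have hlim : Tendsto (fun t => K * ‖(B t)ᵀ * P * B t - Aᵀ * P * A‖) atTop (𝓝 0) := by
    simpa using hB.const_mul K
  have hsmall := hlim.eventually_le_const (half_pos hθ)
  refine ⟨1 - θ / 2, by linarith, hsmall.mono fun t ht x => ?_⟩
  set Δ := (B t)ᵀ * P * B t - Aᵀ * P * A
  have hPx : 0 ≤ x ⬝ᵥ (P *ᵥ x) := by simpa using hP.posSemidef.dotProduct_mulVec_nonneg x
  have hsplit : (B t *ᵥ x) ⬝ᵥ (P *ᵥ (B t *ᵥ x)) =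
      x ⬝ᵥ (P *ᵥ x) - x ⬝ᵥ (S *ᵥ x) + x ⬝ᵥ (Δ *ᵥ x) := by
    rw [← dotProduct_mulVec_transpose_mul_mul, ← dotProduct_sub, ← dotProduct_add, ← sub_mulVec,
      ← add_mulVec, sub_eq_of_eq_add hLyap, add_sub_cancel]
  have hΔ := (le_abs_self _).trans (hKP Δ x)
  rw [hsplit]
  nlinarith [hθS x, mul_le_mul_of_nonneg_right ht hPx]

theorem eventually_energyNorm_mulVec_le_of_lyapunov {A P S : Matrix ι ι ℝ}
    {B : ℕ → Matrix ι ι ℝ} (hP : P.PosDef) (hS : S.PosDef) (hLyap : P = Aᵀ * P * A + S)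
    (hB : Tendsto (fun t => ‖(B t)ᵀ * P * B t - Aᵀ * P * A‖) atTop (𝓝 0)) :
    ∃ r, 0 ≤ r ∧ r < 1 ∧ ∀ᶠ t in atTop, ∀ x, P.energyNorm (B t *ᵥ x) ≤ r * P.energyNorm x := by
  obtain ⟨q, hq, hBq⟩ := eventually_dotProduct_mulVec_le_of_lyapunov hP hS hLyap hB
  exact ⟨√q, Real.sqrt_nonneg q, (Real.sqrt_lt' one_pos).2 (by simpa using hq),
    hBq.mono fun t ht => hP.posSemidef.energyNorm_mulVec_le ht⟩

end Matrix

theorem stmt16_general {n : ℕ}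
    (Atil : Matrix (Fin n) (Fin n) ℝ) (Pstar S : Matrix (Fin n) (Fin n) ℝ)
    (hP : Pstar.PosDef) (hS : S.PosDef)
    (hLyap : Pstar = Atilᵀ * Pstar * Atil + S)
    (At : ℕ → Matrix (Fin n) (Fin n) ℝ)
    (χ : ℕ → Fin n → ℝ) (d : ℕ → Fin n → ℝ)
    (hrec : ∀ t, χ (t + 1) = (At t) *ᵥ χ t + d t)
    (L₁ L₂ ρ : ℝ) (hL₂ : 0 < L₂) (hρ0 : 0 < ρ) (hρ1 : ρ < 1)
    (hAt : ∀ t, ‖(At t)ᵀ * Pstar * At t - Atilᵀ * Pstar * Atil‖ ≤ L₁ * ρ ^ t)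
    (hd : ∀ t, ‖d t‖ ≤ L₂ * ρ ^ t) :
    ∃ (L₄ ρbar : ℝ) (T : ℕ), 0 < L₄ ∧ 0 < ρbar ∧ ρbar < 1 ∧
      ∀ t ≥ T, ‖χ t‖ ≤ L₄ * ρbar ^ t := by
  have hρt : Tendsto (fun t => L₁ * ρ ^ t) atTop (𝓝 0) := by
    simpa using (tendsto_pow_atTop_nhds_zero_of_lt_one hρ0.le hρ1).const_mul L₁
  obtain ⟨r, hr0, hr1, hcontr⟩ := eventually_energyNorm_mulVec_le_of_lyapunov hP hS hLyap
    (squeeze_zero (fun _ => norm_nonneg _) hAt hρt)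
  obtain ⟨T, hT⟩ := eventually_atTop.1 hcontr
  set C := n * √‖Pstar‖
  have hdP (t : ℕ) : Pstar.energyNorm (d t) ≤ C * L₂ * ρ ^ t :=
    calc Pstar.energyNorm (d t) ≤ C * ‖d t‖ := by simpa [C] using energyNorm_le Pstar (d t)
      _ ≤ C * (L₂ * ρ ^ t) := by gcongr; exact hd t
      _ = C * L₂ * ρ ^ t := by ring
  have hstep : ∀ t ≥ T, Pstar.energyNorm (χ (t + 1)) ≤
      r * Pstar.energyNorm (χ t) + C * L₂ * ρ ^ t := fun t ht =>
    calc Pstar.energyNorm (χ (t + 1))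
        ≤ Pstar.energyNorm (At t *ᵥ χ t) + Pstar.energyNorm (d t) := by
          rw [hrec]; exact hP.posSemidef.energyNorm_add_le _ _
      _ ≤ r * Pstar.energyNorm (χ t) + C * L₂ * ρ ^ t := add_le_add (hT t ht _) (hdP t)
  obtain ⟨M, σ, hM, hσ0, hσ1, hbound⟩ := exists_le_mul_pow_of_le_mul_add_mul_pow
    (w := fun t => Pstar.energyNorm (χ t)) hr0 hr1 (by positivity) hρ0.le hρ1 hstep
  obtain ⟨c, hc, hnorm⟩ := hP.exists_norm_le_mul_energyNorm
  refine ⟨c * M, σ, T, by positivity, hσ0, hσ1, fun t ht => ?_⟩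
  calc ‖χ t‖ ≤ c * Pstar.energyNorm (χ t) := hnorm (χ t)
    _ ≤ c * (M * σ ^ t) := by gcongr; exact hbound t ht
    _ = c * M * σ ^ t := by ring

/-- a perturbed linear recursion `χ_{t+1} = Ã_t χ_t + d_t`, where
`Ã_tᵀ P* Ã_t → Ãᵀ P* Ã` exponentially, `d_t → 0` exponentially, and `P* ≻ 0` satisfies
the Lyapunov identity `P* = Ãᵀ P* Ã + S` with `S ≻ 0`, converges to zero exponentially:
`‖χ_t‖ ≤ L₄ ρ̄ᵗ` for some `L₄ > 0`, `ρ̄ ∈ (0,1)` and all sufficiently large `t`. -/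
theorem stmt16 {n : ℕ}
    (Atil : Matrix (Fin n) (Fin n) ℝ) (Pstar S : Matrix (Fin n) (Fin n) ℝ)
    (hP : Pstar.PosDef) (hS : S.PosDef)
    (hLyap : Pstar = Atilᵀ * Pstar * Atil + S)
    (At : ℕ → Matrix (Fin n) (Fin n) ℝ)
    (χ : ℕ → Fin n → ℝ) (d : ℕ → Fin n → ℝ)
    (hrec : ∀ t, χ (t + 1) = (At t) *ᵥ χ t + d t)
    (L₁ L₂ ρ : ℝ) (hL₁ : 0 < L₁) (hL₂ : 0 < L₂) (hρ0 : 0 < ρ) (hρ1 : ρ < 1)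
    (hAt : ∀ t, ‖(At t)ᵀ * Pstar * At t - Atilᵀ * Pstar * Atil‖ ≤ L₁ * ρ ^ t)
    (hd : ∀ t, ‖d t‖ ≤ L₂ * ρ ^ t) :
    ∃ (L₄ ρbar : ℝ) (T : ℕ), 0 < L₄ ∧ 0 < ρbar ∧ ρbar < 1 ∧
      ∀ t ≥ T, ‖χ t‖ ≤ L₄ * ρbar ^ t :=
  stmt16_general Atil Pstar S hP hS hLyap At χ d hrec L₁ L₂ ρ hL₂ hρ0 hρ1 hAt hd
end
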